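/- Let G be a simple connected non-complete graph on n ≥ 4 vertices with normalized Laplacian eigenvalues λ_1 ≥ ... ≥ λ_{n-1} > 0 = λ_n. Suppose λ_1 ≥ θ, λ_2 ≥ β, θ ≥ β, and θ + β(n-2) > n. If 0 < α < 1, then ∑_{i=1}^{n-1} λ_i^α ≤ θ^α + β^α + (n-θ-β)^α/(n-3)^{α-1}. -/

import Mathlib

open Matrix Finset

/-- The normalized Laplacian `D^{-1/2} (D - A) D^{-1/2}` of a simple graph. -/
noncomputable def normLap {n : ℕ} (G : SimpleGraph (Fin n)) [DecidableRel G.Adj] :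
    Matrix (Fin n) (Fin n) ℝ :=
  let Dinvhalf : Matrix (Fin n) (Fin n) ℝ :=
    Matrix.diagonal fun i => (Real.sqrt (G.degree i))⁻¹
  Dinvhalf * (Matrix.diagonal (fun i => (G.degree i : ℝ)) - G.adjMatrix ℝ) * Dinvhalf

/-!
The nonzero eigenvalues sum to `tr 𝓛 = n`. Put `t = (n - θ - β) / (n - 3)`, so `t ≤ β ≤ θ` by
the hypothesis `θ + β (n - 2) > n`, and `θ + β + (n - 3) t = n`. Bound `λ₁ ^ α`, `λ₂ ^ α` by the
tangent lines of the concave map `x ↦ x ^ α` at `θ`, `β`, and every other `λᵢ ^ α` by the tangent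
line at `t`. As `λ₁ ≥ θ`, `λ₂ ≥ β` and slopes decrease, all three lines may be given the common
slope `α t ^ (α - 1)`; the linear parts then add up to a multiple of `∑ λᵢ - n = 0`.
-/

section Concavity

variable {α : ℝ}

theorem rpow_le_rpow_add_mul_sub (hα0 : 0 ≤ α) (hα1 : α ≤ 1) {x y : ℝ} (hx : 0 ≤ x)
    (hy : 0 < y) : x ^ α ≤ y ^ α + α * y ^ (α - 1) * (x - y) := by
  have hbernoulli := rpow_one_add_le_one_add_mul_self
    (s := (x - y) / y) (by rw [le_div_iff₀ hy]; linarith) hα0 hα1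
  rw [show 1 + (x - y) / y = x / y by field_simp; ring, Real.div_rpow hx hy.le,
    div_le_iff₀ (Real.rpow_pos_of_pos hy α)] at hbernoulli
  calc x ^ α ≤ (1 + α * ((x - y) / y)) * y ^ α := hbernoulli
    _ = y ^ α + α * y ^ (α - 1) * (x - y) := by
      rw [Real.rpow_sub_one hy.ne']; field_simp

theorem rpow_le_rpow_add_mul_sub_of_le (hα0 : 0 ≤ α) (hα1 : α ≤ 1) {x y t : ℝ} (ht : 0 < t)
    (hty : t ≤ y) (hyx : y ≤ x) : x ^ α ≤ y ^ α + α * t ^ (α - 1) * (x - y) := by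
  have hslope : y ^ (α - 1) ≤ t ^ (α - 1) := Real.rpow_le_rpow_of_nonpos ht hty (by linarith)
  calc x ^ α ≤ y ^ α + α * y ^ (α - 1) * (x - y) :=
        rpow_le_rpow_add_mul_sub hα0 hα1 (ht.le.trans (hty.trans hyx)) (ht.trans_le hty)
    _ ≤ y ^ α + α * t ^ (α - 1) * (x - y) := by gcongr

theorem sum_rpow_le_card_mul_rpow_add {ι : Type*} (hα0 : 0 ≤ α) (hα1 : α ≤ 1) (s : Finset ι)
    {x : ι → ℝ} (hx : ∀ i ∈ s, 0 ≤ x i) {t : ℝ} (ht : 0 < t) :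
    ∑ i ∈ s, x i ^ α ≤ #s * t ^ α + α * t ^ (α - 1) * (∑ i ∈ s, x i - #s * t) := by
  calc ∑ i ∈ s, x i ^ α ≤ ∑ i ∈ s, (t ^ α + α * t ^ (α - 1) * (x i - t)) :=
        sum_le_sum fun i hi => rpow_le_rpow_add_mul_sub hα0 hα1 (hx i hi) ht
    _ = #s * t ^ α + α * t ^ (α - 1) * (∑ i ∈ s, x i - #s * t) := by
      rw [sum_add_distrib, ← mul_sum, sum_sub_distrib]; simp

theorem rpow_add_rpow_add_sum_rpow_le {ι : Type*} (hα0 : 0 ≤ α) (hα1 : α ≤ 1) (s : Finset ι)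
    {a b θ β t : ℝ} {x : ι → ℝ} (ht : 0 < t) (htβ : t ≤ β) (hβθ : β ≤ θ) (hθa : θ ≤ a)
    (hβb : β ≤ b) (hx : ∀ i ∈ s, 0 ≤ x i) (hsum : a + b + ∑ i ∈ s, x i = θ + β + #s * t) :
    a ^ α + b ^ α + ∑ i ∈ s, x i ^ α ≤ θ ^ α + β ^ α + #s * t ^ α := by
  calc _ ≤ (θ ^ α + α * t ^ (α - 1) * (a - θ)) + (β ^ α + α * t ^ (α - 1) * (b - β))
          + (#s * t ^ α + α * t ^ (α - 1) * (∑ i ∈ s, x i - #s * t)) := by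
        gcongr
        · exact rpow_le_rpow_add_mul_sub_of_le hα0 hα1 ht (htβ.trans hβθ) hθa
        · exact rpow_le_rpow_add_mul_sub_of_le hα0 hα1 ht htβ hβb
        · exact sum_rpow_le_card_mul_rpow_add hα0 hα1 s hx ht
    _ = θ ^ α + β ^ α + #s * t ^ α := by linear_combination (α * t ^ (α - 1)) * hsum

theorem mul_div_rpow_eq_rpow_div_rpow_sub_one {c x : ℝ} (hc : 0 < c) (hx : 0 ≤ x) :
    c * (x / c) ^ α = x ^ α / c ^ (α - 1) := by
  rw [Real.div_rpow hx hc.le, Real.rpow_sub_one hc.ne']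
  field_simp [(Real.rpow_pos_of_pos hc α).ne']

end Concavity

section Fin

variable {M : Type*} [AddCommMonoid M] {n : ℕ}

theorem sum_filter_lt_pred_eq (hn : 3 ≤ n) (g : Fin n → M) :
    ∑ i ∈ univ.filter (fun i : Fin n => (i : ℕ) < n - 1), g i =
      g ⟨0, by omega⟩ + g ⟨1, by omega⟩ + ∑ i ∈ Ico ⟨2, by omega⟩ ⟨n - 1, by omega⟩, g i := by
  have hsplit : univ.filter (fun i : Fin n => (i : ℕ) < n - 1) =
      insert ⟨0, by omega⟩ (insert ⟨1, by omega⟩ (Ico ⟨2, by omega⟩ ⟨n - 1, by omega⟩)) := by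
    ext i
    simp only [mem_filter, mem_univ, true_and, mem_insert, mem_Ico, Fin.ext_iff, Fin.le_def,
      Fin.lt_def]
    omega
  rw [hsplit, sum_insert (by simp [Fin.ext_iff, Fin.le_def]), sum_insert (by simp [Fin.le_def]),
    add_assoc]

theorem card_Ico_two_pred (hn : 3 ≤ n) :
    #(Ico (⟨2, by omega⟩ : Fin n) ⟨n - 1, by omega⟩) = n - 3 := by
  rw [Fin.card_Ico, Fin.val_mk, Fin.val_mk]; omega

theorem sum_univ_eq_add_sum_Ico_add (hn : 3 ≤ n) (g : Fin n → M) :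
    ∑ i, g i = g ⟨0, by omega⟩ + g ⟨1, by omega⟩ + ∑ i ∈ Ico ⟨2, by omega⟩ ⟨n - 1, by omega⟩, g i +
      g ⟨n - 1, by omega⟩ := by
  rw [← sum_filter_lt_pred_eq hn, ← sum_filter_add_sum_filter_not univ
    (fun i : Fin n => (i : ℕ) < n - 1)]
  congr 1
  convert sum_singleton g (⟨n - 1, by omega⟩ : Fin n)
  ext i
  simp only [mem_filter, mem_univ, true_and, mem_singleton, Fin.ext_iff]
  omega

end Fin

theorem trace_normLap {n : ℕ} (G : SimpleGraph (Fin n)) [DecidableRel G.Adj]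
    (hdeg : ∀ v, 0 < G.degree v) : (normLap G).trace = n := by
  have hdiag : ∀ v, normLap G v v = 1 := by
    intro v
    have hd : (0 : ℝ) < G.degree v := by exact_mod_cast hdeg v
    simp only [normLap, mul_diagonal, diagonal_mul, Matrix.sub_apply, diagonal_apply_eq,
      SimpleGraph.adjMatrix_apply, if_neg (G.irrefl), sub_zero]
    field_simp [(Real.sqrt_pos.2 hd).ne']
    rw [Real.sq_sqrt hd.le]
  simp [trace, hdiag]

theorem sum_eigenvalues_normLap {n : ℕ} (hn : 2 ≤ n) (G : SimpleGraph (Fin n))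
    [DecidableRel G.Adj] (hG : G.Connected) (hH : (normLap G).IsHermitian) :
    ∑ i, hH.eigenvalues i = n := by
  have : Nontrivial (Fin n) := Fin.nontrivial_iff_two_le.2 hn
  have htrace := hH.trace_eq_sum_eigenvalues
  rw [trace_normLap G fun v => hG.preconnected.degree_pos_of_nontrivial v] at htrace
  exact_mod_cast htrace.symm

theorem sAlpha_upper_bound_two {n : ℕ} (hn : 4 ≤ n) (G : SimpleGraph (Fin n)) [DecidableRel G.Adj]
    (hG : G.Connected) (hH : (normLap G).IsHermitian)
    (lam : Fin n → ℝ) (hanti : Antitone lam)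
    (hperm : ∃ σ : Equiv.Perm (Fin n), lam = hH.eigenvalues ∘ σ)
    (hlast : lam ⟨n - 1, by omega⟩ = 0) (hpos : lam ⟨n - 2, by omega⟩ > 0)
    (θ β α : ℝ) (hθ1 : lam ⟨0, by omega⟩ ≥ θ) (hβ1 : lam ⟨1, by omega⟩ ≥ β)
    (hθβ : θ ≥ β) (hsum : θ + β * ((n : ℝ) - 2) > n)
    (hα1 : 0 < α) (hα2 : α < 1) :
    (∑ i ∈ Finset.univ.filter (fun i : Fin n => (i : ℕ) < n - 1), lam i ^ α) ≤
      θ ^ α + β ^ α + ((n : ℝ) - θ - β) ^ α / ((n : ℝ) - 3) ^ (α - 1) := by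
  have hn3 : 3 ≤ n := by omega
  have hn4 : (4 : ℝ) ≤ n := by exact_mod_cast hn
  set mid := Ico (⟨2, by omega⟩ : Fin n) ⟨n - 1, by omega⟩
  have hcard : (#mid : ℝ) = n - 3 := by
    rw [card_Ico_two_pred hn3, Nat.cast_sub hn3, Nat.cast_ofNat]
  have htotal : lam ⟨0, by omega⟩ + lam ⟨1, by omega⟩ + ∑ i ∈ mid, lam i = n := by
    obtain ⟨σ, hσ⟩ := hperm
    have hsum_lam : ∑ i, lam i = n := by
      rw [hσ, ← sum_eigenvalues_normLap (by omega) G hG hH]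
      exact Equiv.sum_comp σ _
    rwa [sum_univ_eq_add_sum_Ico_add hn3, hlast, add_zero] at hsum_lam
  have hmid_pos : ∀ i ∈ mid, 0 < lam i := fun i hi =>
    hpos.trans_le (hanti (by simp [mid, Fin.le_def, Fin.lt_def] at hi ⊢; omega))
  have hmid_sum_pos : 0 < ∑ i ∈ mid, lam i :=
    sum_pos hmid_pos ⟨⟨2, by omega⟩, by simp [mid, Fin.lt_def]; omega⟩
  set t := ((n : ℝ) - θ - β) / (n - 3)
  have ht : 0 < t := div_pos (by linarith) (by linarith)
  have htβ : t ≤ β := by rw [div_le_iff₀ (by linarith)]; linarith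
  have hct : ((n : ℝ) - 3) * t = n - θ - β := mul_div_cancel₀ _ (by linarith)
  have hfinal : ((n : ℝ) - 3) * t ^ α = ((n : ℝ) - θ - β) ^ α / ((n : ℝ) - 3) ^ (α - 1) :=
    mul_div_rpow_eq_rpow_div_rpow_sub_one (by linarith) (by linarith)
  rw [sum_filter_lt_pred_eq hn3, ← hfinal, ← hcard]
  exact rpow_add_rpow_add_sum_rpow_le hα1.le hα2.le mid ht htβ hθβ hθ1 hβ1
    (fun i hi => (hmid_pos i hi).le) (by rw [htotal, hcard, hct]; ring)
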